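/- arXiv:2504.00572 — 4 statements merged into one kernel-verified Lean document; each statement's English description precedes it below -/
import Mathlib

section
/- Let N ≥ 1, k ≥ 1 be integers, β ∈ (0,1), and let V' = {v_1 < v_2 < ⋯ < v_k} ⊆ {1,…,N} be a set of vaccinated vertices. Set v_0 := 0, v_{k+1} := N+1, and w_i := v_i − v_{i−1} − 1 for i = 1,…,k+1. Consider bond percolation with parameter β on the path graph P_N with the vertices of V' (and all incident edges) removed, and let the patient zero be uniform over all N vertices of P_N, with the epidemic final size equal to 0 if the patient zero lies in V' and otherwise equal to the number of vertices reachable from the patient zero in the open subgraph of P_N − V'. Then the expected epidemic final size equals (N−k)(1+β)/(N(1−β)) − 2β(k+1)/(N(1−β)²) + (2/(N(1−β)²)) Σ_{i=1}^{k+1} β^{w_i+1}. -/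
open scoped Classical

noncomputable section

/-- Probability weight of an edge configuration in bond percolation with parameter `β`:
each edge is independently open (`true`) with probability `β` and closed with
probability `1 - β`. -/
def configWeight {ι : Type*} [Fintype ι] (β : ℝ) (ω : ι → Bool) : ℝ :=
  ∏ e : ι, if ω e then β else 1 - β

/-- Two vertices are adjacent in the open subgraph if some open edge joins them. -/
def OpenAdj {ι V : Type*} (E : ι → V × V) (ω : ι → Bool) (a b : V) : Prop :=
  ∃ e : ι, ω e = true ∧ (E e = (a, b) ∨ E e = (b, a))

/-- Number of vertices reachable from `v` in the open subgraph (including `v` itself). -/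
def reachCount {ι V : Type*} [Fintype V] (E : ι → V × V) (ω : ι → Bool) (v : V) : ℕ :=
  (Finset.univ.filter fun u => Relation.ReflTransGen (OpenAdj E ω) v u).card

/-- Expected epidemic final size (expected number of vertices reachable from the
patient zero `v` in the open subgraph) under bond percolation with parameter `β`. -/
def expectedEFS {ι V : Type*} [Fintype ι] [Fintype V] (β : ℝ) (E : ι → V × V) (v : V) : ℝ :=
  ∑ ω : ι → Bool, configWeight β ω * (reachCount E ω v : ℝ)

/-- The path graph `P_N`: vertices `Fin N` (vertex `i` of `{1,…,N}` is index `i-1`)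
and edges joining consecutive vertices. -/
def pathEdge (N : ℕ) : Fin (N - 1) → Fin N × Fin N :=
  fun i => (⟨i.1, by have := i.2; omega⟩, ⟨i.1 + 1, by have := i.2; omega⟩)

/-- Open adjacency in the graph with the vaccinated vertices (and all incident edges)
removed: both endpoints must be unvaccinated and joined by an open edge. -/
def OpenAdjVacc {ι V : Type*} (E : ι → V × V) (vac : V → Prop) (ω : ι → Bool)
    (a b : V) : Prop :=
  ¬ vac a ∧ ¬ vac b ∧ OpenAdj E ω a b

/-- Epidemic final size with vaccinated set: `0` if the patient zero `v` is vaccinated,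
otherwise the number of vertices reachable from `v` in the open subgraph of the graph
with the vaccinated vertices removed. -/
def efsVacc {ι V : Type*} [Fintype V] (E : ι → V × V) (vac : V → Prop)
    (ω : ι → Bool) (v : V) : ℕ :=
  if vac v then 0
  else (Finset.univ.filter fun u => Relation.ReflTransGen (OpenAdjVacc E vac ω) v u).card

/-- Expected epidemic final size with vaccinated set `vac`, with the patient zero
uniform over all vertices, under bond percolation with parameter `β`. -/
def expectedEFSVacc {ι V : Type*} [Fintype ι] [Fintype V] (β : ℝ) (E : ι → V × V)
    (vac : V → Prop) : ℝ :=
  (Fintype.card V : ℝ)⁻¹ *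
    ∑ v : V, ∑ ω : ι → Bool, configWeight β ω * (efsVacc E vac ω v : ℝ)

/-! ### Auxiliary lemmas -/

lemma sum_configWeight_indicator {ι : Type*} [Fintype ι] (β : ℝ) (S : Finset ι) :
    ∑ ω : ι → Bool, configWeight β ω * (if ∀ e ∈ S, ω e = true then (1:ℝ) else 0)
      = β ^ S.card := by
  classical
  have h1 : ∀ ω : ι → Bool,
      configWeight β ω * (if ∀ e ∈ S, ω e = true then (1:ℝ) else 0)
        = ∏ e : ι, ((if ω e then β else 1 - β) *
            (if e ∈ S then (if ω e then (1:ℝ) else 0) else 1)) := by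
    intro ω
    rw [Finset.prod_mul_distrib]
    congr 1
    rw [Finset.prod_ite_mem, Finset.prod_boole]
    simp
  simp only [h1]
  rw [← Fintype.prod_sum (fun (e : ι) (b : Bool) => (if b = true then β else 1 - β) *
    if e ∈ S then (if b = true then (1:ℝ) else 0) else 1)]
  have h2 : ∀ e : ι, (∑ b : Bool, ((if b then β else 1 - β) *
      (if e ∈ S then (if b then (1:ℝ) else 0) else 1))) = if e ∈ S then β else 1 := by
    intro e
    rw [Fintype.sum_bool]
    by_cases h : e ∈ S <;> simp [h]
  rw [Finset.prod_congr rfl fun e _ => h2 e]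
  rw [Finset.prod_ite_mem, Finset.univ_inter, Finset.prod_const]

lemma sum_univ_fintype_congr {α M : Type*} [AddCommMonoid M] (i1 i2 : Fintype α) (f : α → M) :
    @Finset.sum α M _ (@Finset.univ α i1) f = @Finset.sum α M _ (@Finset.univ α i2) f := by
  have h : i1 = i2 := Subsingleton.elim i1 i2
  subst h
  rfl

lemma Tsum (β : ℝ) (hβ1 : β ≠ 1) (w : ℕ) :
    ∑ x ∈ Finset.range w, ∑ y ∈ Finset.range w, β ^ (max x y - min x y)
      = ((w : ℝ) * (1+β) * (1-β) - 2*β + 2*β^(w+1)) / (1-β)^2 := by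
  have hb : (1:ℝ) - β ≠ 0 := sub_ne_zero.mpr (Ne.symm hβ1)
  have hb' : β - 1 ≠ 0 := sub_ne_zero.mpr hβ1
  induction w with
  | zero => simp
  | succ w ih =>
    have hrefl : ∑ x ∈ Finset.range w, β ^ (w - x) = β * ∑ i ∈ Finset.range w, β ^ i := by
      rw [← Finset.sum_range_reflect, Finset.mul_sum]
      refine Finset.sum_congr rfl fun j hj => ?_
      rw [Finset.mem_range] at hj
      have : w - (w - 1 - j) = j + 1 := by omega
      rw [this, pow_succ, mul_comm]
    have step : ∑ x ∈ Finset.range (w+1), ∑ y ∈ Finset.range (w+1), β ^ (max x y - min x y)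
        = (∑ x ∈ Finset.range w, ∑ y ∈ Finset.range w, β ^ (max x y - min x y))
          + (∑ x ∈ Finset.range w, β ^ (w - x)) + ((∑ y ∈ Finset.range w, β ^ (w - y)) + 1) := by
      rw [Finset.sum_range_succ]
      congr 1
      · rw [← Finset.sum_add_distrib]
        refine Finset.sum_congr rfl fun x hx => ?_
        rw [Finset.mem_range] at hx
        rw [Finset.sum_range_succ]
        congr 2
        omega
      · rw [Finset.sum_range_succ]
        congr 1
        · refine Finset.sum_congr rfl fun y hy => ?_
          rw [Finset.mem_range] at hy
          congr 1
          omega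
        · simp
    rw [step, ih, hrefl, geom_sum_eq hβ1]
    push_cast
    field_simp
    ring

lemma seg_sum (β : ℝ) (N c d : ℕ) (hcd : c < d) (hdN : d ≤ N + 1) :
    ∑ a ∈ Finset.univ.filter (fun a : Fin N => c ≤ a.1 ∧ a.1 + 1 < d),
      ∑ b ∈ Finset.univ.filter (fun b : Fin N => c ≤ b.1 ∧ b.1 + 1 < d),
        β ^ (max a.1 b.1 - min a.1 b.1)
    = ∑ x ∈ Finset.range (d - c - 1), ∑ y ∈ Finset.range (d - c - 1),
        β ^ (max x y - min x y) := by
  have hmem : ∀ x ∈ Finset.range (d - c - 1), x + c < N := by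
    intro x hx; rw [Finset.mem_range] at hx; omega
  refine Finset.sum_bij' (fun a _ => a.1 - c) (fun x hx => ⟨x + c, hmem x hx⟩) ?_ ?_ ?_ ?_ ?_ <;>
    try dsimp only
  · intro a ha; rw [Finset.mem_filter] at ha; rw [Finset.mem_range]; omega
  · intro x hx; rw [Finset.mem_range] at hx; rw [Finset.mem_filter]
    refine ⟨Finset.mem_univ _, ?_, ?_⟩ <;> simp <;> omega
  · intro a ha; rw [Finset.mem_filter] at ha; apply Fin.ext; simp; omega
  · intro x hx; rw [Finset.mem_range] at hx; simp
  · intro a ha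
    rw [Finset.mem_filter] at ha
    refine Finset.sum_bij' (fun b _ => b.1 - c) (fun y hy => ⟨y + c, hmem y hy⟩) ?_ ?_ ?_ ?_ ?_ <;>
      try dsimp only
    · intro b hb; rw [Finset.mem_filter] at hb; rw [Finset.mem_range]; omega
    · intro y hy; rw [Finset.mem_range] at hy; rw [Finset.mem_filter]
      refine ⟨Finset.mem_univ _, ?_, ?_⟩ <;> simp <;> omega
    · intro b hb; rw [Finset.mem_filter] at hb; apply Fin.ext; simp; omega
    · intro y hy; rw [Finset.mem_range] at hy; simp
    · intro b hb
      rw [Finset.mem_filter] at hb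
      congr 1
      omega

section Reach

variable {N : ℕ} {vac : Fin N → Prop} {ω : Fin (N - 1) → Bool}

/-- Connectivity condition: all vertices between `a` and `b` are unvaccinated
and all edges between them are open. -/
def Conn (vac : Fin N → Prop) (ω : Fin (N - 1) → Bool) (a b : Fin N) : Prop :=
  (∀ x : Fin N, min a.1 b.1 ≤ x.1 → x.1 ≤ max a.1 b.1 → ¬ vac x) ∧
  (∀ j : Fin (N - 1), min a.1 b.1 ≤ j.1 → j.1 + 1 ≤ max a.1 b.1 → ω j = true)

lemma openAdjVacc_spec {x y : Fin N} (h : OpenAdjVacc (pathEdge N) vac ω x y) :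
    ¬ vac x ∧ ¬ vac y ∧ ∃ e : Fin (N-1), ω e = true ∧
      ((x.1 = e.1 ∧ y.1 = e.1+1) ∨ (y.1 = e.1 ∧ x.1 = e.1+1)) := by
  obtain ⟨hx, hy, e, he, hor⟩ := h
  refine ⟨hx, hy, e, he, ?_⟩
  rcases hor with h | h <;> simp only [pathEdge, Prod.mk.injEq, Fin.ext_iff] at h <;>
    [left; right] <;> omega

lemma openAdjVacc_symm : Symmetric (OpenAdjVacc (pathEdge N) vac ω) := by
  rintro x y ⟨hx, hy, e, he, hor⟩
  exact ⟨hy, hx, e, he, hor.symm⟩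

lemma conn_symm {a b : Fin N} (h : Conn vac ω a b) : Conn vac ω b a := by
  obtain ⟨h1, h2⟩ := h
  constructor
  · intro x hx1 hx2; exact h1 x (by omega) (by omega)
  · intro j hj1 hj2; exact h2 j (by omega) (by omega)

lemma reach_to_conn {a b : Fin N} (ha : ¬ vac a)
    (h : Relation.ReflTransGen (OpenAdjVacc (pathEdge N) vac ω) a b) : Conn vac ω a b := by
  induction h with
  | refl =>
    constructor
    · intro x hx1 hx2
      have : x = a := Fin.ext (by omega)
      rwa [this]
    · intro j hj1 hj2; omega
  | tail hab hbc ih =>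
    rename_i b c
    obtain ⟨hb, hc, e, he, hor⟩ := openAdjVacc_spec hbc
    constructor
    · intro x hx1 hx2
      by_cases hx : min a.1 b.1 ≤ x.1 ∧ x.1 ≤ max a.1 b.1
      · exact ih.1 x hx.1 hx.2
      · have : x = c := Fin.ext (by omega)
        rwa [this]
    · intro j hj1 hj2
      by_cases hj : min a.1 b.1 ≤ j.1 ∧ j.1 + 1 ≤ max a.1 b.1
      · exact ih.2 j hj.1 hj.2
      · have : j = e := Fin.ext (by omega)
        rwa [this]

lemma conn_to_reach_le (d : ℕ) : ∀ a b : Fin N, ¬ vac a → a.1 ≤ b.1 → b.1 - a.1 = d →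
    Conn vac ω a b → Relation.ReflTransGen (OpenAdjVacc (pathEdge N) vac ω) a b := by
  induction d with
  | zero =>
    intro a b _ h1 h2 _
    have : a = b := Fin.ext (by omega)
    rw [this]
  | succ d ih =>
    intro a b ha h1 h2 hconn
    have hab : a.1 < b.1 := by omega
    have hbN : b.1 < N := b.2
    have haN : a.1 < N - 1 := by omega
    have haN' : a.1 + 1 < N := by omega
    set a' : Fin N := ⟨a.1 + 1, haN'⟩ with ha'def
    set e : Fin (N-1) := ⟨a.1, haN⟩ with hedef
    have hva : a'.1 = a.1 + 1 := rfl
    have hev : e.1 = a.1 := rfl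
    have hωe : ω e = true := hconn.2 e (by rw [hev]; omega) (by rw [hev]; omega)
    have hva' : ¬ vac a' := hconn.1 a' (by rw [hva]; omega) (by rw [hva]; omega)
    have hstep : OpenAdjVacc (pathEdge N) vac ω a a' := by
      refine ⟨ha, hva', e, hωe, Or.inl ?_⟩
      rw [pathEdge, Prod.ext_iff]
      exact ⟨Fin.ext rfl, Fin.ext rfl⟩
    have hconn' : Conn vac ω a' b := by
      constructor
      · intro x hx1 hx2
        rw [hva] at hx1 hx2
        exact hconn.1 x (by omega) (by omega)
      · intro j hj1 hj2
        rw [hva] at hj1 hj2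
        exact hconn.2 j (by omega) (by omega)
    exact Relation.ReflTransGen.head hstep
      (ih a' b hva' (by rw [hva]; omega) (by rw [hva]; omega) hconn')

lemma reach_iff_conn {a b : Fin N} (ha : ¬ vac a) :
    Relation.ReflTransGen (OpenAdjVacc (pathEdge N) vac ω) a b ↔ Conn vac ω a b := by
  constructor
  · exact reach_to_conn ha
  · intro hconn
    rcases le_or_gt a.1 b.1 with h | h
    · exact conn_to_reach_le _ a b ha h rfl hconn
    · have hb : ¬ vac b := hconn.1 b (by omega) (by omega)
      have := conn_to_reach_le (a.1 - b.1) b a hb (by omega) rfl (conn_symm hconn)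
      exact (@Relation.ReflTransGen.symmetric _ _ ⟨fun _ _ h => openAdjVacc_symm h⟩).symm _ _ this

lemma pair_prob (β : ℝ) (a b : Fin N) (ha : ¬ vac a) :
    ∑ ω : Fin (N-1) → Bool, configWeight β ω *
      (if Relation.ReflTransGen (OpenAdjVacc (pathEdge N) vac ω) a b then (1:ℝ) else 0)
    = if (∀ x : Fin N, min a.1 b.1 ≤ x.1 → x.1 ≤ max a.1 b.1 → ¬ vac x)
      then β ^ (max a.1 b.1 - min a.1 b.1) else 0 := by
  by_cases hVC : ∀ x : Fin N, min a.1 b.1 ≤ x.1 → x.1 ≤ max a.1 b.1 → ¬ vac x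
  · rw [if_pos hVC]
    set S := Finset.univ.filter
      (fun j : Fin (N-1) => min a.1 b.1 ≤ j.1 ∧ j.1 + 1 ≤ max a.1 b.1) with hS
    have hcard : S.card = max a.1 b.1 - min a.1 b.1 := by
      have h1 : S.card = (Finset.Ico (min a.1 b.1) (max a.1 b.1)).card := by
        apply Finset.card_bij (fun j _ => j.1)
        · intro j hj; rw [hS, Finset.mem_filter] at hj; rw [Finset.mem_Ico]; omega
        · intro j1 h1 j2 h2 h; exact Fin.ext h
        · intro n hn
          rw [Finset.mem_Ico] at hn
          have hnN : n < N - 1 := by have := a.2; have := b.2; omega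
          exact ⟨⟨n, hnN⟩, by
            rw [hS, Finset.mem_filter]
            exact ⟨Finset.mem_univ _,
              show min a.1 b.1 ≤ n ∧ n + 1 ≤ max a.1 b.1 by omega⟩, rfl⟩
      rw [h1, Nat.card_Ico]
    rw [← hcard]
    refine Eq.trans ?_ (sum_configWeight_indicator β S)
    refine Eq.trans (sum_univ_fintype_congr _ _ _) (Finset.sum_congr rfl fun ω _ => ?_)
    have hiff : Relation.ReflTransGen (OpenAdjVacc (pathEdge N) vac ω) a b ↔
        (∀ e ∈ S, ω e = true) := by
      rw [reach_iff_conn ha]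
      constructor
      · intro h e he
        rw [hS, Finset.mem_filter] at he
        exact h.2 e he.2.1 he.2.2
      · intro h
        exact ⟨hVC, fun j h1 h2 => h j (by
          rw [hS, Finset.mem_filter]; exact ⟨Finset.mem_univ _, h1, h2⟩)⟩
    congr 1
    by_cases h : ∀ e ∈ S, ω e = true
    · rw [if_pos h, if_pos (hiff.mpr h)]
    · rw [if_neg h, if_neg (fun hh => h (hiff.mp hh))]
  · rw [if_neg hVC]
    apply Finset.sum_eq_zero; intro ω _
    rw [if_neg, mul_zero]
    intro h; exact hVC (reach_to_conn ha h).1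

lemma per_vertex (β : ℝ) (vac : Fin N → Prop) (a : Fin N) :
    ∑ ω : Fin (N-1) → Bool, configWeight β ω * (efsVacc (pathEdge N) vac ω a : ℝ)
    = ∑ b : Fin N, (if (∀ x : Fin N, min a.1 b.1 ≤ x.1 → x.1 ≤ max a.1 b.1 → ¬ vac x)
        then β ^ (max a.1 b.1 - min a.1 b.1) else 0) := by
  by_cases ha : vac a
  · rw [Finset.sum_eq_zero, Finset.sum_eq_zero]
    · intro b _
      rw [if_neg]
      intro h; exact h a (by omega) (by omega) ha
    · intro ω _; rw [efsVacc, if_pos ha]; simp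
  · have h1 : ∀ ω : Fin (N-1) → Bool, (efsVacc (pathEdge N) vac ω a : ℝ)
        = ∑ b : Fin N, (if Relation.ReflTransGen (OpenAdjVacc (pathEdge N) vac ω) a b
            then (1:ℝ) else 0) := by
      intro ω
      rw [efsVacc, if_neg ha, Finset.card_filter]
      push_cast
      rfl
    have h2 : ∀ ω : Fin (N-1) → Bool, configWeight β ω * (efsVacc (pathEdge N) vac ω a : ℝ)
        = ∑ b : Fin N, configWeight β ω *
            (if Relation.ReflTransGen (OpenAdjVacc (pathEdge N) vac ω) a b then (1:ℝ) else 0) :=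
      fun ω => by rw [h1, Finset.mul_sum]
    rw [Finset.sum_congr rfl fun ω _ => h2 ω, Finset.sum_comm]
    exact Finset.sum_congr rfl fun b _ => pair_prob β a b ha

end Reach

lemma tele (v : ℕ → ℕ) (m : ℕ) (h : ∀ i, i < m → v i < v (i+1)) :
    (∑ i ∈ Finset.Icc 1 m, (v i - v (i-1) - 1)) + m + v 0 = v m := by
  induction m with
  | zero => simp
  | succ m ih =>
    rw [Finset.sum_Icc_succ_top (by omega : 1 ≤ m+1)]
    have h1 := h m (by omega)
    have h2 := ih (fun i hi => h i (by omega))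
    have h3 : m + 1 - 1 = m := rfl
    rw [h3]
    omega

/-- Bond percolation with parameter `β ∈ (0,1)` on the path graph `P_N`
with a vaccinated set `V' = {v_1 < ⋯ < v_k} ⊆ {1,…,N}` removed (here encoded by a
strictly monotone `v : ℕ → ℕ` with `v 0 = 0` and `v (k+1) = N+1`), patient zero uniform
over all `N` vertices and final size `0` on vaccinated patient zeros: the expected
epidemic final size equals
`(N−k)(1+β)/(N(1−β)) − 2β(k+1)/(N(1−β)²) + (2/(N(1−β)²)) Σ_{i=1}^{k+1} β^{w_i+1}`,
where `w_i = v_i − v_{i−1} − 1`. -/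
theorem stmt5 (N k : ℕ) (hN : 1 ≤ N) (hk : 1 ≤ k) (β : ℝ) (hβ : β ∈ Set.Ioo (0 : ℝ) 1)
    (v : ℕ → ℕ) (hv0 : v 0 = 0) (hvtop : v (k + 1) = N + 1)
    (hmono : StrictMonoOn v (Set.Icc 0 (k + 1)))
    (hmem : ∀ j, 1 ≤ j → j ≤ k → v j ∈ Finset.Icc 1 N) :
    expectedEFSVacc β (pathEdge N) (fun a => ∃ j ∈ Finset.Icc 1 k, v j = a.1 + 1) =
      ((N : ℝ) - k) * (1 + β) / (N * (1 - β))
        - 2 * β * (k + 1) / (N * (1 - β) ^ 2)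
        + 2 / (N * (1 - β) ^ 2) *
            ∑ i ∈ Finset.Icc 1 (k + 1), β ^ (v i - v (i - 1) - 1 + 1) := by
  classical
  obtain ⟨hβ0, hβ1⟩ := hβ
  have hb1 : (1:ℝ) - β ≠ 0 := ne_of_gt (by linarith)
  have hN0 : (N:ℝ) ≠ 0 := Nat.cast_ne_zero.mpr (by omega)
  set vac : Fin N → Prop := fun a => ∃ j ∈ Finset.Icc 1 k, v j = a.1 + 1 with hvacdef
  have hmono' : ∀ i j, i ≤ j → j ≤ k+1 → v i ≤ v j := fun i j hij hj =>
    hmono.monotoneOn (Set.mem_Icc.mpr ⟨Nat.zero_le _, by omega⟩)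
      (Set.mem_Icc.mpr ⟨Nat.zero_le _, hj⟩) hij
  have hstrict : ∀ i j, i < j → j ≤ k+1 → v i < v j := fun i j hij hj =>
    hmono (Set.mem_Icc.mpr ⟨Nat.zero_le _, by omega⟩)
      (Set.mem_Icc.mpr ⟨Nat.zero_le _, hj⟩) hij
  -- every unvaccinated vertex lies in a segment
  have hsegA : ∀ a : Fin N, ¬ vac a →
      ∃ i, 1 ≤ i ∧ i ≤ k+1 ∧ v (i-1) ≤ a.1 ∧ a.1 + 1 < v i := by
    intro a ha
    have hex : ∃ i, 1 ≤ i ∧ i ≤ k+1 ∧ a.1 + 1 < v i :=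
      ⟨k+1, by omega, le_rfl, by rw [hvtop]; have := a.2; omega⟩
    obtain ⟨hi1, hik, hia⟩ := Nat.find_spec hex
    refine ⟨Nat.find hex, hi1, hik, ?_, hia⟩
    rcases Nat.eq_or_lt_of_le hi1 with h1 | h1
    · have h0 : Nat.find hex - 1 = 0 := by omega
      rw [h0, hv0]; omega
    · have hmin := Nat.find_min hex (m := Nat.find hex - 1) (by omega)
      push_neg at hmin
      have hle : v (Nat.find hex - 1) ≤ a.1 + 1 := hmin (by omega) (by omega)
      have hne : v (Nat.find hex - 1) ≠ a.1 + 1 := by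
        intro heq
        exact ha ⟨Nat.find hex - 1, Finset.mem_Icc.mpr ⟨by omega, by omega⟩, heq⟩
      omega
  -- characterization of the "no vaccinated vertex between" condition
  have hseg : ∀ a b : Fin N,
      (∀ x : Fin N, min a.1 b.1 ≤ x.1 → x.1 ≤ max a.1 b.1 → ¬ vac x) ↔
      (∃ i ∈ Finset.Icc 1 (k+1),
        (v (i-1) ≤ a.1 ∧ a.1+1 < v i) ∧ (v (i-1) ≤ b.1 ∧ b.1+1 < v i)) := by
    intro a b
    constructor
    · intro hVC
      have ha : ¬ vac a := hVC a (by omega) (by omega)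
      obtain ⟨i, hi1, hik, hlow, hia⟩ := hsegA a ha
      refine ⟨i, Finset.mem_Icc.mpr ⟨hi1, hik⟩, ⟨hlow, hia⟩, ?_, ?_⟩
      · by_contra hcon
        push_neg at hcon
        have h1 : 1 ≤ i - 1 := by
          rcases Nat.eq_zero_or_pos (i-1) with h0 | h0
          · rw [h0, hv0] at hcon; omega
          · omega
        have hk1 : i - 1 ≤ k := by omega
        have hm := hmem (i-1) h1 hk1
        rw [Finset.mem_Icc] at hm
        have hxN : v (i-1) - 1 < N := by omega
        exact hVC ⟨v (i-1) - 1, hxN⟩ (show min a.1 b.1 ≤ v (i-1) - 1 by omega)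
          (show v (i-1) - 1 ≤ max a.1 b.1 by omega)
          ⟨i-1, Finset.mem_Icc.mpr ⟨h1, hk1⟩, show v (i-1) = v (i-1) - 1 + 1 by omega⟩
      · by_contra hcon
        push_neg at hcon
        have hik' : i ≤ k := by
          by_contra hcc
          have hieq : i = k + 1 := by omega
          rw [hieq, hvtop] at hcon
          have := b.2; omega
        have hm := hmem i hi1 hik'
        rw [Finset.mem_Icc] at hm
        have hxN : v i - 1 < N := by omega
        exact hVC ⟨v i - 1, hxN⟩ (show min a.1 b.1 ≤ v i - 1 by omega)
          (show v i - 1 ≤ max a.1 b.1 by omega)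
          ⟨i, Finset.mem_Icc.mpr ⟨hi1, hik'⟩, show v i = v i - 1 + 1 by omega⟩
    · rintro ⟨i, hi, ⟨ha1, ha2⟩, hb1', hb2'⟩ x hx1 hx2 hvx
      obtain ⟨j, hj, hjx⟩ := hvx
      rw [Finset.mem_Icc] at hi hj
      have hvj1 : v (i-1) < v j := by omega
      have hvj2 : v j < v i := by omega
      have hj1 : i - 1 < j := by
        by_contra hc; push_neg at hc
        exact absurd (hmono' j (i-1) hc (by omega)) (by omega)
      have hj2 : j < i := by
        by_contra hc; push_neg at hc
        exact absurd (hmono' i j hc (by omega)) (by omega)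
      omega
  have huniq : ∀ (a : Fin N) (i i' : ℕ), i ∈ Finset.Icc 1 (k+1) → i' ∈ Finset.Icc 1 (k+1) →
      (v (i-1) ≤ a.1 ∧ a.1+1 < v i) → (v (i'-1) ≤ a.1 ∧ a.1+1 < v i') → i = i' := by
    intro a i i' hi hi' hai hai'
    rw [Finset.mem_Icc] at hi hi'
    by_contra hne
    rcases Nat.lt_or_ge i i' with h | h
    · have := hmono' i (i'-1) (by omega) (by omega)
      omega
    · have h' : i' < i := by omega
      have := hmono' i' (i-1) (by omega) (by omega)
      omega
  -- main computation
  unfold expectedEFSVacc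
  rw [Fintype.card_fin]
  have hsegsum : ∀ i ∈ Finset.Icc 1 (k+1),
      (∑ a ∈ Finset.univ.filter (fun a : Fin N => v (i-1) ≤ a.1 ∧ a.1 + 1 < v i),
        ∑ b ∈ Finset.univ.filter (fun b : Fin N => v (i-1) ≤ b.1 ∧ b.1 + 1 < v i),
          β ^ (max a.1 b.1 - min a.1 b.1))
      = (((v i - v (i-1) - 1 : ℕ):ℝ)*(1+β)*(1-β) - 2*β
          + 2*β^((v i - v (i-1) - 1)+1)) / (1-β)^2 := by
    intro i hi
    rw [Finset.mem_Icc] at hi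
    have hlt : v (i-1) < v i := hstrict (i-1) i (by omega) hi.2
    have hle : v i ≤ N + 1 := by
      have := hmono' i (k+1) hi.2 le_rfl
      omega
    rw [seg_sum β N (v (i-1)) (v i) hlt hle, Tsum β (ne_of_lt hβ1) (v i - v (i-1) - 1)]
  refine Eq.trans (congrArg (fun z : ℝ => (N:ℝ)⁻¹ * z)
    (Finset.sum_congr rfl fun a _ =>
      Eq.trans (sum_univ_fintype_congr _ _ _) (per_vertex β vac a))) ?_
  refine Eq.trans (congrArg (fun z : ℝ => (N:ℝ)⁻¹ * z)
    (Eq.trans ?_ (Finset.sum_congr rfl hsegsum))) ?_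
  · -- exchange the double sum over vertices into a sum over segments
    rw [eq_comm]
    have expand : ∀ i : ℕ,
        (∑ a ∈ Finset.univ.filter (fun a : Fin N => v (i-1) ≤ a.1 ∧ a.1 + 1 < v i),
          ∑ b ∈ Finset.univ.filter (fun b : Fin N => v (i-1) ≤ b.1 ∧ b.1 + 1 < v i),
            β ^ (max a.1 b.1 - min a.1 b.1))
        = ∑ a : Fin N, ∑ b : Fin N,
            (if ((v (i-1) ≤ a.1 ∧ a.1+1 < v i) ∧ (v (i-1) ≤ b.1 ∧ b.1+1 < v i))
              then β ^ (max a.1 b.1 - min a.1 b.1) else 0) := by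
      intro i
      rw [Finset.sum_filter]
      refine Finset.sum_congr rfl fun a _ => ?_
      by_cases hpa : v (i-1) ≤ a.1 ∧ a.1+1 < v i
      · rw [if_pos hpa, Finset.sum_filter]
        refine Finset.sum_congr rfl fun b _ => ?_
        by_cases hpb : v (i-1) ≤ b.1 ∧ b.1+1 < v i
        · rw [if_pos hpb, if_pos ⟨hpa, hpb⟩]
        · rw [if_neg hpb, if_neg (fun h => hpb h.2)]
      · rw [if_neg hpa, eq_comm]
        exact Finset.sum_eq_zero fun b _ => if_neg (fun h => hpa h.1)
    rw [Finset.sum_congr rfl fun i _ => expand i, Finset.sum_comm]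
    refine Finset.sum_congr rfl fun a _ => ?_
    rw [Finset.sum_comm]
    refine Finset.sum_congr rfl fun b _ => ?_
    by_cases hVC : ∀ x : Fin N, min a.1 b.1 ≤ x.1 → x.1 ≤ max a.1 b.1 → ¬ vac x
    · obtain ⟨i0, hi0, hpa0, hpb0⟩ := (hseg a b).1 hVC
      rw [if_pos hVC, Finset.sum_eq_single i0]
      · rw [if_pos ⟨hpa0, hpb0⟩]
      · intro i hi hne
        rw [if_neg]
        rintro ⟨hpa', hpb'⟩
        exact hne (huniq a i i0 hi hi0 hpa' hpa0)
      · intro habs; exact absurd hi0 habs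
    · rw [if_neg hVC]
      exact Finset.sum_eq_zero fun i hi =>
        if_neg (fun h => hVC ((hseg a b).2 ⟨i, hi, h.1, h.2⟩))
  · -- final algebra
    have hlt' : ∀ i, i < k+1 → v i < v (i+1) := fun i h => hstrict i (i+1) (by omega) (by omega)
    have htele := tele v (k+1) hlt'
    rw [hv0, hvtop] at htele
    have hkN : k ≤ N := by omega
    have hsumnat : (∑ i ∈ Finset.Icc 1 (k+1), (v i - v (i-1) - 1)) = N - k := by omega
    have hsumw : (∑ i ∈ Finset.Icc 1 (k+1), ((v i - v (i-1) - 1 : ℕ) : ℝ)) = (N:ℝ) - k := by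
      rw [← Nat.cast_sum, hsumnat, Nat.cast_sub hkN]
    have hsplit : ∑ i ∈ Finset.Icc 1 (k+1),
        ((((v i - v (i-1) - 1 : ℕ)):ℝ)*(1+β)*(1-β) - 2*β
          + 2*β^((v i - v (i-1) - 1)+1)) / (1-β)^2
        = (((N:ℝ) - k)*(1+β)*(1-β) - 2*β*(k+1)
            + 2*∑ i ∈ Finset.Icc 1 (k+1), β^((v i - v (i-1) - 1)+1)) / (1-β)^2 := by
      rw [← Finset.sum_div]
      congr 1
      rw [Finset.sum_add_distrib, Finset.sum_sub_distrib, ← Finset.sum_mul, ← Finset.sum_mul,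
        hsumw, Finset.sum_const, Nat.card_Icc, ← Finset.mul_sum]
      push_cast
      ring
    rw [hsplit]
    set S := ∑ i ∈ Finset.Icc 1 (k+1), β^((v i - v (i-1) - 1)+1) with hSdef
    field_simp

end
end

section
/- Let N ≥ 1, k ≥ 1 be integers and let V' = {v_1 < v_2 < ⋯ < v_k} ⊆ {1,…,N}. Set v_0 := 0 and v_{k+1} := N+1. Then the number of ordered pairs (x,y) with x, y ∈ {1,…,N}, x ≠ y, such that there exists v ∈ V' with min(x,y) < v < max(x,y), equals N(N−2) + k + 2(v_1 − v_k) − Σ_{i=1}^{k+1} (v_i − v_{i−1} − 1)². -/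
open scoped Classical

private lemma tele_sum (w : ℕ → ℤ) : ∀ n : ℕ, 1 ≤ n →
    ∑ i ∈ Finset.Icc 2 n, (w i - w (i - 1)) = w n - w 1 := by
  intro n hn
  induction n with
  | zero => omega
  | succ m ih =>
    rcases Nat.eq_or_lt_of_le hn with h | h
    · have : m = 0 := by omega
      subst this
      simp
    · have hm : 1 ≤ m := by omega
      rw [Finset.sum_Icc_succ_top (by omega : 2 ≤ m + 1), ih hm]
      have h1 : m + 1 - 1 = m := rfl
      rw [h1]
      ring


/-- For `V' = {v_1 < ⋯ < v_k} ⊆ {1,…,N}` (encoded by a strictly monotone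
`v : ℕ → ℕ` with `v 0 = 0` and `v (k+1) = N+1`), the number of ordered pairs `(x,y)` of
distinct vertices of the path graph `P_N` whose geodesic interior meets `V'` (i.e. such
that some `v_j` lies strictly between `x` and `y`) equals
`N(N−2) + k + 2(v_1 − v_k) − Σ_{i=1}^{k+1} (v_i − v_{i−1} − 1)²`. -/
theorem stmt7 (N k : ℕ) (hN : 1 ≤ N) (hk : 1 ≤ k) (v : ℕ → ℕ)
    (hv0 : v 0 = 0) (hvtop : v (k + 1) = N + 1)
    (hmono : StrictMonoOn v (Set.Icc 0 (k + 1))) :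
    (((((Finset.Icc 1 N) ×ˢ (Finset.Icc 1 N)).filter
        (fun p => p.1 ≠ p.2 ∧
          ∃ j ∈ Finset.Icc 1 k, min p.1 p.2 < v j ∧ v j < max p.1 p.2)).card : ℤ)
      = (N : ℤ) * ((N : ℤ) - 2) + k + 2 * ((v 1 : ℤ) - (v k : ℤ))
        - ∑ i ∈ Finset.Icc 1 (k + 1), ((v i : ℤ) - (v (i - 1) : ℤ) - 1) ^ 2) := by
  classical
  set s : Finset ℕ := Finset.Icc 1 N with hs
  -- basic monotonicity facts
  have hlt : ∀ {i j : ℕ}, i < j → j ≤ k + 1 → v i < v j := by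
    intro i j hij hj
    exact hmono ⟨Nat.zero_le _, by omega⟩ ⟨Nat.zero_le _, hj⟩ hij
  have hle : ∀ {i j : ℕ}, i ≤ j → j ≤ k + 1 → v i ≤ v j := by
    intro i j hij hj
    rcases Nat.eq_or_lt_of_le hij with h | h
    · rw [h]
    · exact (hlt h hj).le
  have hvleN : ∀ {i : ℕ}, i ≤ k → v i ≤ N := by
    intro i hi
    have := hlt (show i < k + 1 by omega) le_rfl
    omega
  have hv1 : 1 ≤ v 1 := by
    have := hlt (show 0 < 1 by norm_num) (by omega)
    omega
  -- the blocks
  set B : ℕ → Finset ℕ := fun i => Finset.Icc (max (v (i - 1)) 1) (min (v i) N) with hB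
  have hmemB : ∀ i x, x ∈ B i ↔ (v (i - 1) ≤ x ∧ 1 ≤ x ∧ x ≤ v i ∧ x ≤ N) := by
    intro i x
    simp only [hB, Finset.mem_Icc, max_le_iff, le_min_iff]
    tauto
  set P : ℕ × ℕ → Prop :=
    fun p => ∃ j ∈ Finset.Icc 1 k, min p.1 p.2 < v j ∧ v j < max p.1 p.2 with hPdef
  set Good : Finset (ℕ × ℕ) := (s ×ˢ s).filter (fun p => p.1 ≠ p.2 ∧ P p) with hGood
  set Bad : Finset (ℕ × ℕ) := (s ×ˢ s).filter (fun p => p.1 ≠ p.2 ∧ ¬ P p) with hBad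
  -- total count
  have htot : Good.card + Bad.card = N * N - N := by
    have h1 : Good = ((s ×ˢ s).filter (fun p => p.1 ≠ p.2)).filter (fun p => P p) := by
      rw [hGood, Finset.filter_filter]
    have h2 : Bad = ((s ×ˢ s).filter (fun p => p.1 ≠ p.2)).filter (fun p => ¬ P p) := by
      rw [hBad, Finset.filter_filter]
    rw [h1, h2, Finset.card_filter_add_card_filter_not]
    have h3 : (s ×ˢ s).filter (fun p => p.1 ≠ p.2) = s.offDiag := by
      ext ⟨x, y⟩
      simp [Finset.mem_offDiag, Finset.mem_filter, Finset.mem_product]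
      tauto
    rw [h3, Finset.offDiag_card]
    have : s.card = N := by rw [hs, Nat.card_Icc]; omega
    rw [this]
  -- Bad as a disjoint union of offDiags of blocks
  have hBadU : Bad = (Finset.Icc 1 (k + 1)).biUnion (fun i => (B i).offDiag) := by
    ext ⟨x, y⟩
    simp only [hBad, Finset.mem_filter, Finset.mem_product, Finset.mem_biUnion,
      Finset.mem_offDiag, Finset.mem_Icc, hs]
    constructor
    · rintro ⟨⟨⟨hx1, hxN⟩, ⟨hy1, hyN⟩⟩, hxy, hnP⟩
      have hmx : min x y ≤ x := min_le_left _ _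
      have hmy : min x y ≤ y := min_le_right _ _
      have hMx : x ≤ max x y := le_max_left _ _
      have hMy : y ≤ max x y := le_max_right _ _
      have hMN : max x y ≤ N := by omega
      have hex : ∃ i, i ≤ k ∧ min x y < v (i + 1) := ⟨k, le_rfl, by rw [hvtop]; omega⟩
      obtain ⟨hi0k, hmvi⟩ := Nat.find_spec hex
      set i0 := Nat.find hex with hi0
      have hvi0 : v i0 ≤ min x y := by
        rcases Nat.eq_zero_or_pos i0 with h0 | h0
        · rw [h0, hv0]; omega
        · have hmin := Nat.find_min hex (show i0 - 1 < i0 by omega)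
          push_neg at hmin
          have h' := hmin (by omega)
          have heq : i0 - 1 + 1 = i0 := by omega
          rw [heq] at h'
          exact h'
      have hMvi : max x y ≤ v (i0 + 1) := by
        by_contra h
        push_neg at h
        rcases Nat.lt_or_ge i0 k with hik | hik
        · rw [hPdef] at hnP
          exact hnP ⟨i0 + 1, Finset.mem_Icc.mpr ⟨by omega, by omega⟩, hmvi, h⟩
        · have : i0 = k := by omega
          rw [this, hvtop] at h
          omega
      refine ⟨i0 + 1, ⟨by omega, by omega⟩, ?_, ?_, hxy⟩
      · rw [hmemB]
        simp only [Nat.add_sub_cancel]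
        omega
      · rw [hmemB]
        simp only [Nat.add_sub_cancel]
        omega
    · rintro ⟨i, ⟨hi1, hik⟩, hxB, hyB, hxy⟩
      rw [hmemB] at hxB hyB
      refine ⟨⟨⟨?_, ?_⟩, ⟨?_, ?_⟩⟩, hxy, ?_⟩
      · omega
      · omega
      · omega
      · omega
      · rw [hPdef]
        rintro ⟨j, hj, hj1, hj2⟩
        rw [Finset.mem_Icc] at hj
        have hmin : v (i - 1) ≤ min x y := le_min hxB.1 hyB.1
        have hmax : max x y ≤ v i := max_le hxB.2.2.1 hyB.2.2.1
        have hlo : v (i - 1) < v j := by omega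
        have hhi : v j < v i := by omega
        have h1 : j < i := by
          by_contra h
          push_neg at h
          have := hle h (by omega)
          omega
        have h2 : i - 1 < j := by
          by_contra h
          push_neg at h
          have := hle h (by omega)
          omega
        omega
  -- disjointness
  have hdisj : ∀ a ∈ Finset.Icc 1 (k + 1), ∀ b ∈ Finset.Icc 1 (k + 1), a ≠ b →
      Disjoint ((B a).offDiag) ((B b).offDiag) := by
    have key : ∀ a b, 1 ≤ a → a < b → b ≤ k + 1 →
        Disjoint ((B a).offDiag) ((B b).offDiag) := by
      intro a b ha hab hb
      rw [Finset.disjoint_left]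
      rintro ⟨x, y⟩ hpa hpb
      rw [Finset.mem_offDiag] at hpa hpb
      obtain ⟨hxa, hya, hxy⟩ := hpa
      obtain ⟨hxb, hyb, -⟩ := hpb
      rw [hmemB] at hxa hya hxb hyb
      have h1 : v a ≤ v (b - 1) := hle (by omega) (by omega)
      omega
    intro a ha b hb hab
    rw [Finset.mem_Icc] at ha hb
    rcases Nat.lt_or_ge a b with h | h
    · exact key a b ha.1 h hb.2
    · exact (key b a hb.1 (by omega) ha.2).symm
  have hcard : Bad.card = ∑ i ∈ Finset.Icc 1 (k + 1), ((B i).offDiag.card) := by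
    rw [hBadU]
    exact Finset.card_biUnion hdisj
  -- block cardinalities
  have hB1 : ((B 1).card : ℤ) = (v 1 : ℤ) := by
    have hvN : v 1 ≤ N := hvleN hk
    have hb : B 1 = Finset.Icc 1 (v 1) := by
      ext a
      simp only [hB, Finset.mem_Icc, show (1 : ℕ) - 1 = 0 from rfl, hv0]
      omega
    rw [hb, Nat.card_Icc]
    omega
  have hBtop : ((B (k + 1)).card : ℤ) = (N : ℤ) + 1 - (v k : ℤ) := by
    have hvk1 : 1 ≤ v k := le_trans hv1 (hle hk (by omega))
    have hvkN : v k ≤ N := hvleN le_rfl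
    have hb : B (k + 1) = Finset.Icc (v k) N := by
      ext a
      simp only [hB, Finset.mem_Icc, Nat.add_sub_cancel, hvtop]
      omega
    rw [hb, Nat.card_Icc]
    omega
  have hBmid : ∀ i, 2 ≤ i → i ≤ k →
      ((B i).card : ℤ) = (v i : ℤ) - (v (i - 1) : ℤ) + 1 := by
    intro i h2 hik
    have hv1' : 1 ≤ v (i - 1) := le_trans hv1 (hle (by omega) (by omega))
    have hviN : v i ≤ N := hvleN hik
    have hvv : v (i - 1) ≤ v i := hle (by omega) (by omega)
    have hb : B i = Finset.Icc (v (i - 1)) (v i) := by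
      ext a
      simp only [hB, Finset.mem_Icc]
      omega
    rw [hb, Nat.card_Icc]
    omega
  have hsq : ∀ n : ℕ, n ≤ n * n := by intro n; nlinarith
  have hoff : ∀ i, ((B i).offDiag.card : ℤ) =
      ((B i).card : ℤ) * ((B i).card : ℤ) - ((B i).card : ℤ) := by
    intro i
    rw [Finset.offDiag_card, Nat.cast_sub (hsq _)]
    push_cast
    ring
  -- the key sum identity
  have hsum : ∑ i ∈ Finset.Icc 1 (k + 1),
      (((B i).offDiag.card : ℤ) - ((v i : ℤ) - (v (i - 1) : ℤ) - 1) ^ 2)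
      = (N : ℤ) - (k : ℤ) - 2 * (v 1 : ℤ) + 2 * (v k : ℤ) := by
    have e1 : Finset.Icc 1 (k + 1) = insert (k + 1) (Finset.Icc 1 k) := by
      ext a; simp [Finset.mem_Icc]; omega
    have e2 : Finset.Icc 1 k = insert 1 (Finset.Icc 2 k) := by
      ext a; simp [Finset.mem_Icc]; omega
    rw [e1, Finset.sum_insert (by simp [Finset.mem_Icc]), e2,
      Finset.sum_insert (by simp [Finset.mem_Icc])]
    have hmid : ∑ i ∈ Finset.Icc 2 k,
        (((B i).offDiag.card : ℤ) - ((v i : ℤ) - (v (i - 1) : ℤ) - 1) ^ 2)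
        = ∑ i ∈ Finset.Icc 2 k, (3 * ((v i : ℤ) - (v (i - 1) : ℤ)) - 1) := by
      refine Finset.sum_congr rfl (fun i hi => ?_)
      rw [Finset.mem_Icc] at hi
      rw [hoff i, hBmid i hi.1 hi.2]
      ring
    have htel : ∑ i ∈ Finset.Icc 2 k, ((v i : ℤ) - (v (i - 1) : ℤ)) =
        (v k : ℤ) - (v 1 : ℤ) := tele_sum (fun i => (v i : ℤ)) k hk
    have hconst : ∑ i ∈ Finset.Icc 2 k, (1 : ℤ) = (k : ℤ) - 1 := by
      rw [Finset.sum_const, Nat.card_Icc]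
      have : k + 1 - 2 = k - 1 := by omega
      rw [this]
      simp
      omega
    have hmid2 : ∑ i ∈ Finset.Icc 2 k, (3 * ((v i : ℤ) - (v (i - 1) : ℤ)) - 1)
        = 3 * ((v k : ℤ) - (v 1 : ℤ)) - ((k : ℤ) - 1) := by
      rw [Finset.sum_sub_distrib, ← Finset.mul_sum, htel, hconst]
    rw [hmid, hmid2, hoff, hoff, hB1, hBtop]
    simp only [Nat.add_sub_cancel, show (1 : ℕ) - 1 = 0 from rfl, hv0, hvtop]
    push_cast
    ring
  -- put everything together
  have hBadZ : (Bad.card : ℤ) = ∑ i ∈ Finset.Icc 1 (k + 1), ((B i).offDiag.card : ℤ) := by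
    rw [hcard]
    push_cast
    rfl
  have hsplit : ∑ i ∈ Finset.Icc 1 (k + 1), ((B i).offDiag.card : ℤ)
      - ∑ i ∈ Finset.Icc 1 (k + 1), ((v i : ℤ) - (v (i - 1) : ℤ) - 1) ^ 2
      = (N : ℤ) - (k : ℤ) - 2 * (v 1 : ℤ) + 2 * (v k : ℤ) := by
    rw [← Finset.sum_sub_distrib]
    exact hsum
  have htotZ : (Good.card : ℤ) + (Bad.card : ℤ) = (N : ℤ) * (N : ℤ) - (N : ℤ) := by
    have h1 : Good.card + Bad.card + N = N * N := by
      have h2 : N ≤ N * N := hsq N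
      omega
    have := congrArg (fun n : ℕ => (n : ℤ)) h1
    push_cast at this
    linarith
  show (Good.card : ℤ) = _
  linarith [htotZ, hBadZ, hsplit]
end

section
/- Let N ≥ 1, k ≥ 1 be integers and let V' = {v_1 < v_2 < ⋯ < v_k} ⊆ {1,…,N}. Then Σ_{i ∈ {1,…,N}∖V'} min_{1≤j≤k} |i − v_j| = v_1(v_1 − 1)/2 + (N − v_k)(N − v_k + 1)/2 + Σ_{j=1}^{k−1} ⌊(v_{j+1} − v_j)²/4⌋. -/
open scoped Classical

lemma sum_Ico_id' (m : ℕ) : ∑ i ∈ Finset.Ico 1 m, i = m * (m - 1) / 2 := by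
  have := Finset.sum_range_id m
  rw [Finset.range_eq_Ico] at this
  rcases Nat.eq_zero_or_pos m with h | h
  · subst h; simp
  · rw [Finset.sum_eq_sum_Ico_succ_bot h] at this
    simpa using this

lemma tri (m : ℕ) : ∑ i ∈ Finset.Ico 1 m, (m - i) = m * (m - 1) / 2 := by
  rw [← sum_Ico_id' m]
  apply Finset.sum_nbij' (i := fun i => m - i) (j := fun i => m - i) <;>
    intros <;> simp_all <;> omega

lemma quarter (d : ℕ) : ∑ i ∈ Finset.range d, min i (d - i) = d ^ 2 / 4 := by
  induction d using Nat.twoStepInduction with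
  | zero => simp
  | one => simp
  | more d ih _ =>
    rw [Finset.sum_range_succ', Finset.sum_range_succ]
    have h : ∀ i ∈ Finset.range d, min (i+1) (d + 2 - (i+1)) = min i (d - i) + 1 := by
      intro i hi; simp at hi; omega
    calc (∑ i ∈ Finset.range d, min (i+1) (d + 2 - (i+1))) + min (d+1) (d+2-(d+1)) + min 0 (d+2-0)
        = (∑ i ∈ Finset.range d, (min i (d - i) + 1)) + 1 := by
          rw [Finset.sum_congr rfl h]; simp
      _ = d^2/4 + d + 1 := by
          rw [Finset.sum_add_distrib, ih, Finset.sum_const, Finset.card_range, smul_eq_mul, mul_one]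
      _ = (d+2)^2/4 := by ring_nf; omega

lemma quarter' (a b : ℕ) : ∑ i ∈ Finset.Ioo a b, (min (i - a) (b - i)) = (b - a) ^ 2 / 4 := by
  rcases le_or_gt b a with h | h
  · rw [Finset.Ioo_eq_empty (by omega), Nat.sub_eq_zero_of_le h]; simp
  · have hq := quarter (b - a)
    rw [Finset.range_eq_Ico, Finset.sum_eq_sum_Ico_succ_bot (by omega : 0 < b - a)] at hq
    rw [← hq, show min 0 (b - a - 0) = 0 by omega, zero_add]
    apply Finset.sum_nbij' (i := fun i => i - a) (j := fun i => i + a) <;>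
      (intro x hx; simp only [Finset.mem_Ioo, Finset.mem_Ico] at *) <;> omega

/-- For `V' = {v_1 < ⋯ < v_k} ⊆ {1,…,N}` (encoded by `v : ℕ → ℕ`
strictly monotone on `{1,…,k}` with `1 ≤ v 1` and `v k ≤ N`), the sum over the
unvaccinated vertices `i ∈ {1,…,N}∖V'` of the graph distance `min_j |i − v_j|` (on the
path graph `P_N`) equals
`v_1(v_1 − 1)/2 + (N − v_k)(N − v_k + 1)/2 + Σ_{j=1}^{k−1} ⌊(v_{j+1} − v_j)²/4⌋`. -/
theorem stmt8 (N k : ℕ) (hN : 1 ≤ N) (hk : 1 ≤ k) (v : ℕ → ℕ)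
    (hmono : StrictMonoOn v (Set.Icc 1 k)) (h1 : 1 ≤ v 1) (hkN : v k ≤ N) :
    ∑ i ∈ (Finset.Icc 1 N) \ ((Finset.Icc 1 k).image v),
        (Finset.Icc 1 k).inf' (Finset.nonempty_Icc.mpr hk)
          (fun j => max (i - v j) (v j - i))
      = v 1 * (v 1 - 1) / 2 + (N - v k) * (N - v k + 1) / 2
        + ∑ j ∈ Finset.Icc 1 (k - 1), (v (j + 1) - v j) ^ 2 / 4 := by
  have hmon : ∀ a ∈ Finset.Icc 1 k, ∀ b ∈ Finset.Icc 1 k, a ≤ b → v a ≤ v b := by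
    intro a ha b hb hab
    exact hmono.monotoneOn (by simpa using ha) (by simpa using hb) hab
  have h1k : (1 : ℕ) ∈ Finset.Icc 1 k := by simp [hk]
  have hkk : k ∈ Finset.Icc 1 k := by simp [hk]
  set f : ℕ → ℕ := fun i => (Finset.Icc 1 k).inf' (Finset.nonempty_Icc.mpr hk)
      (fun j => max (i - v j) (v j - i)) with hfdef
  -- value on left tail
  have hL : ∀ i ∈ Finset.Ico 1 (v 1), f i = v 1 - i := by
    intro i hi
    simp only [Finset.mem_Ico] at hi
    apply le_antisymm
    · have := Finset.inf'_le (fun j => max (i - v j) (v j - i)) h1k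
      exact this.trans (by omega)
    · apply Finset.le_inf'
      intro j hj
      have := hmon 1 h1k j hj (by simp at hj; omega)
      omega
  -- value on right tail
  have hR : ∀ i ∈ Finset.Ioc (v k) N, f i = i - v k := by
    intro i hi
    simp only [Finset.mem_Ioc] at hi
    apply le_antisymm
    · have := Finset.inf'_le (fun j => max (i - v j) (v j - i)) hkk
      exact this.trans (by omega)
    · apply Finset.le_inf'
      intro j hj
      have := hmon j hj k hkk (by simp at hj; omega)
      omega
  -- value on gaps
  have hG : ∀ j ∈ Finset.Icc 1 (k - 1), ∀ i ∈ Finset.Ioo (v j) (v (j + 1)),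
      f i = min (i - v j) (v (j + 1) - i) := by
    intro j hj i hi
    simp only [Finset.mem_Icc] at hj
    simp only [Finset.mem_Ioo] at hi
    have hjm : j ∈ Finset.Icc 1 k := by simp only [Finset.mem_Icc]; omega
    have hjm1 : j + 1 ∈ Finset.Icc 1 k := by simp only [Finset.mem_Icc]; omega
    apply le_antisymm
    · have ha : f i ≤ max (i - v j) (v j - i) :=
        Finset.inf'_le (fun j => max (i - v j) (v j - i)) hjm
      have hb : f i ≤ max (i - v (j + 1)) (v (j + 1) - i) :=
        Finset.inf'_le (fun j => max (i - v j) (v j - i)) hjm1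
      omega
    · apply Finset.le_inf'
      intro j' hj'
      rcases le_or_gt j' j with hle | hlt
      · have := hmon j' hj' j hjm hle
        omega
      · have := hmon (j + 1) hjm1 j' hj' hlt
        omega
  -- the partition
  have hd1 : Disjoint (Finset.Ico 1 (v 1)) (Finset.Ioc (v k) N) := by
    rw [Finset.disjoint_left]
    intro i hi hi'
    simp only [Finset.mem_Ico, Finset.mem_Ioc] at hi hi'
    have := hmon 1 h1k k hkk hk
    omega
  have hd2 : Disjoint (Finset.Ico 1 (v 1) ∪ Finset.Ioc (v k) N)
      ((Finset.Icc 1 (k - 1)).biUnion (fun j => Finset.Ioo (v j) (v (j + 1)))) := by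
    rw [Finset.disjoint_left]
    intro i hi hi'
    simp only [Finset.mem_union, Finset.mem_Ico, Finset.mem_Ioc] at hi
    simp only [Finset.mem_biUnion, Finset.mem_Icc, Finset.mem_Ioo] at hi'
    obtain ⟨j, hj, hij1, hij2⟩ := hi'
    have hjm : j ∈ Finset.Icc 1 k := by simp only [Finset.mem_Icc]; omega
    have hjm1 : j + 1 ∈ Finset.Icc 1 k := by simp only [Finset.mem_Icc]; omega
    have hv1 := hmon 1 h1k j hjm (by omega)
    have hvk := hmon (j + 1) hjm1 k hkk (by omega)
    omega
  have hd3 : (↑(Finset.Icc 1 (k - 1)) : Set ℕ).PairwiseDisjoint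
      (fun j => Finset.Ioo (v j) (v (j + 1))) := by
    have key : ∀ a b : ℕ, 1 ≤ a → b ≤ k - 1 → a < b →
        Disjoint (Finset.Ioo (v a) (v (a + 1))) (Finset.Ioo (v b) (v (b + 1))) := by
      intro a b ha hb hab
      rw [Finset.disjoint_left]
      intro i hi hi'
      simp only [Finset.mem_Ioo] at hi hi'
      have : v (a + 1) ≤ v b := hmon (a + 1) (by simp only [Finset.mem_Icc]; omega) b
        (by simp only [Finset.mem_Icc]; omega) (by omega)
      omega
    intro a ha b hb hab
    simp only [Finset.coe_Icc, Set.mem_Icc] at ha hb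
    rcases lt_or_gt_of_ne hab with h | h
    · exact key a b (by omega) (by omega) h
    · exact (key b a (by omega) (by omega) h).symm
  have hpart : Finset.Icc 1 N \ (Finset.Icc 1 k).image v
      = (Finset.Ico 1 (v 1) ∪ Finset.Ioc (v k) N)
        ∪ (Finset.Icc 1 (k - 1)).biUnion (fun j => Finset.Ioo (v j) (v (j + 1))) := by
    ext i
    simp only [Finset.mem_sdiff, Finset.mem_Icc, Finset.mem_image, Finset.mem_union,
      Finset.mem_Ico, Finset.mem_Ioc, Finset.mem_biUnion, Finset.mem_Ioo, not_exists]
    constructor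
    · rintro ⟨⟨hi1, hiN⟩, hnot⟩
      have hne : ∀ j, 1 ≤ j → j ≤ k → v j ≠ i := by
        intro j hj1 hj2 h
        exact hnot j ⟨⟨hj1, hj2⟩, h⟩
      rcases lt_or_ge i (v 1) with h | h
      · exact Or.inl (Or.inl ⟨hi1, h⟩)
      rcases lt_or_ge (v k) i with h' | h'
      · exact Or.inl (Or.inr ⟨h', hiN⟩)
      -- middle case
      right
      have hv1i : v 1 < i := lt_of_le_of_ne h (hne 1 le_rfl hk)
      have hivk : i < v k := lt_of_le_of_ne h' (Ne.symm (hne k hk le_rfl))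
      set T := (Finset.Icc 1 k).filter (fun j => v j < i) with hT
      have hTne : T.Nonempty := ⟨1, by simp [hT, hk, hv1i]⟩
      set j := T.max' hTne with hj
      have hjT : j ∈ T := T.max'_mem hTne
      simp only [hT, Finset.mem_filter, Finset.mem_Icc] at hjT
      obtain ⟨⟨hj1, hjk⟩, hvji⟩ := hjT
      have hjk' : j ≠ k := by intro he; rw [he] at hvji; omega
      refine ⟨j, ⟨hj1, by omega⟩, hvji, ?_⟩
      have hj1k : j + 1 ∈ Finset.Icc 1 k := by simp only [Finset.mem_Icc]; omega
      have : ¬ v (j + 1) < i := by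
        intro hc
        have : j + 1 ∈ T := by simp [hT]; omega
        have := Finset.le_max' T (j + 1) this
        omega
      have := hne (j + 1) (by omega) (by omega)
      omega
    · intro h
      have hv1k := hmon 1 h1k k hkk hk
      rcases h with (⟨hi1, hiv⟩ | ⟨hvi, hiN⟩) | ⟨j, hj, hij1, hij2⟩
      · refine ⟨⟨hi1, by omega⟩, ?_⟩
        rintro j ⟨⟨hj1, hjk⟩, hji⟩
        have := hmon 1 h1k j (by simp only [Finset.mem_Icc]; omega) hj1
        omega
      · refine ⟨⟨by omega, hiN⟩, ?_⟩
        rintro j ⟨⟨hj1, hjk⟩, hji⟩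
        have := hmon j (by simp only [Finset.mem_Icc]; omega) k hkk hjk
        omega
      · obtain ⟨hj1, hj2⟩ := hj
        have hjm : j ∈ Finset.Icc 1 k := by simp only [Finset.mem_Icc]; omega
        have hjm1 : j + 1 ∈ Finset.Icc 1 k := by simp only [Finset.mem_Icc]; omega
        have hv1j := hmon 1 h1k j hjm (by omega)
        have hvjk := hmon (j + 1) hjm1 k hkk (by omega)
        refine ⟨⟨by omega, by omega⟩, ?_⟩
        rintro j' ⟨⟨hj1', hjk'⟩, hji'⟩
        have hjm' : j' ∈ Finset.Icc 1 k := by simp only [Finset.mem_Icc]; omega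
        rcases le_or_gt j' j with hle | hlt
        · have := hmon j' hjm' j hjm hle; omega
        · have := hmon (j + 1) hjm1 j' hjm' hlt; omega
  -- put it together
  rw [hpart, Finset.sum_union hd2, Finset.sum_union hd1, Finset.sum_biUnion hd3]
  rw [Finset.sum_congr rfl hL, tri]
  have hRsum : ∑ i ∈ Finset.Ioc (v k) N, f i = (N - v k) * (N - v k + 1) / 2 := by
    rw [Finset.sum_congr rfl hR]
    have : ∑ i ∈ Finset.Ico 1 (N - v k + 1), i = (N - v k + 1) * (N - v k) / 2 :=
      sum_Ico_id' _
    rw [show (N - v k) * (N - v k + 1) / 2 = (N - v k + 1) * (N - v k) / 2 by ring_nf, ← this]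
    apply Finset.sum_nbij' (i := fun i => i - v k) (j := fun i => i + v k) <;>
      (intro x hx; simp only [Finset.mem_Ioc, Finset.mem_Ico] at *) <;> omega
  rw [hRsum]
  have hGsum : ∀ j ∈ Finset.Icc 1 (k - 1),
      ∑ i ∈ Finset.Ioo (v j) (v (j + 1)), f i = (v (j + 1) - v j) ^ 2 / 4 := by
    intro j hj
    rw [Finset.sum_congr rfl (hG j hj), quarter']
  rw [Finset.sum_congr rfl hGsum]
end

section
/- Let N ≥ 3 be an integer and β ∈ (0,1). In bond percolation with parameter β on the cycle graph C_N, the expected number of vertices reachable from any fixed vertex in the open subgraph equals (1+β)/(1−β) − (β^{N−1}/(1−β))·((N−1)²β² − (2N² − 2N − 1)β + N²) + N²β^{N−1} − N(N−1)β^N. -/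
open scoped Classical

noncomputable section

/-- The cycle graph `C_N`: vertices `Fin N`, and for each `i` an edge joining `i` to
`i+1 (mod N)`. -/
def cycleEdge (N : ℕ) : Fin N → Fin N × Fin N :=
  fun i => (i, ⟨(i.1 + 1) % N, Nat.mod_lt _ (by have := i.2; omega)⟩)

/-! ### Auxiliary percolation lemmas -/

/-- Indicator of a proposition. -/
def pInd (P : Prop) : ℝ := if P then 1 else 0

lemma pInd_pos {P : Prop} (h : P) : pInd P = 1 := by simp [pInd, h]

lemma pInd_neg {P : Prop} (h : ¬P) : pInd P = 0 := by simp [pInd, h]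

lemma pInd_congr {P Q : Prop} (h : P ↔ Q) : pInd P = pInd Q := by
  by_cases hP : P
  · rw [pInd_pos hP, pInd_pos (h.mp hP)]
  · rw [pInd_neg hP, pInd_neg (fun hQ => hP (h.mpr hQ))]

lemma pInd_eq_ite {P : Prop} [Decidable P] : pInd P = if P then 1 else 0 := by
  by_cases h : P <;> simp [pInd, h]

section Aux

variable {ι : Type*} [Fintype ι] [DecidableEq ι]

lemma sum_configWeight_prod (g : ι → Bool → ℝ) :
    ∑ ω : ι → Bool, ∏ e : ι, g e (ω e) = ∏ e : ι, (g e true + g e false) := by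
  rw [← Fintype.prod_sum]
  exact Finset.prod_congr rfl fun e _ => by rw [Fintype.sum_bool]

lemma sum_configWeight_ind (β : ℝ) (S : Finset ι) :
    ∑ ω : ι → Bool, configWeight β ω * pInd (∀ e ∈ S, ω e = true) = β ^ S.card := by
  have h1 : ∀ ω : ι → Bool, configWeight β ω * pInd (∀ e ∈ S, ω e = true)
      = ∏ e : ι, ((if ω e = true then β else 1 - β)
          * (if e ∈ S then (if ω e = true then (1:ℝ) else 0) else 1)) := by
    intro ω
    rw [Finset.prod_mul_distrib]
    congr 1
    · rw [Finset.prod_ite_mem, Finset.univ_inter, Finset.prod_boole, pInd_eq_ite]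
      simp
  have h3 := sum_configWeight_prod
    (fun e b => (if b = true then β else 1 - β) *
      (if e ∈ S then (if b = true then (1:ℝ) else 0) else 1))
  refine ((Finset.sum_congr rfl fun ω _ => h1 ω).trans (h3.trans ?_))
  have h2 : ∀ e : ι,
      ((if (true : Bool) = true then β else 1 - β)
          * (if e ∈ S then (if (true : Bool) = true then (1:ℝ) else 0) else 1))
      + ((if (false : Bool) = true then β else 1 - β)
          * (if e ∈ S then (if (false : Bool) = true then (1:ℝ) else 0) else 1))
      = if e ∈ S then β else 1 := by
    intro e
    by_cases he : e ∈ S <;> simp [he] <;> try ring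
  rw [Finset.prod_congr rfl fun e _ => h2 e, Finset.prod_ite_mem, Finset.univ_inter,
    Finset.prod_const]

lemma sum_configWeight_or (β : ℝ) (S T : Finset ι) :
    ∑ ω : ι → Bool, configWeight β ω *
        pInd ((∀ e ∈ S, ω e = true) ∨ (∀ e ∈ T, ω e = true))
      = β ^ S.card + β ^ T.card - β ^ (S ∪ T).card := by
  have key : ∀ ω : ι → Bool,
      configWeight β ω * pInd ((∀ e ∈ S, ω e = true) ∨ (∀ e ∈ T, ω e = true))
      = configWeight β ω * pInd (∀ e ∈ S, ω e = true)
        + configWeight β ω * pInd (∀ e ∈ T, ω e = true)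
        - configWeight β ω * pInd (∀ e ∈ S ∪ T, ω e = true) := by
    intro ω
    have hu : (∀ e ∈ S ∪ T, ω e = true) ↔ (∀ e ∈ S, ω e = true) ∧ (∀ e ∈ T, ω e = true) := by
      simp [Finset.mem_union, or_imp, forall_and]
    rw [pInd_congr hu]
    by_cases hS : ∀ e ∈ S, ω e = true <;> by_cases hT : ∀ e ∈ T, ω e = true
    · rw [pInd_pos (Or.inl hS), pInd_pos hS, pInd_pos hT, pInd_pos ⟨hS, hT⟩]; ring
    · rw [pInd_pos (Or.inl hS), pInd_pos hS, pInd_neg hT, pInd_neg (fun h => hT h.2)]; ring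
    · rw [pInd_pos (Or.inr hT), pInd_neg hS, pInd_pos hT, pInd_neg (fun h => hS h.1)]; ring
    · rw [pInd_neg (fun h => h.elim hS hT), pInd_neg hS, pInd_neg hT,
        pInd_neg (fun h => hS h.1)]; ring
  rw [Finset.sum_congr rfl fun ω _ => key ω, Finset.sum_sub_distrib, Finset.sum_add_distrib,
    sum_configWeight_ind β S, sum_configWeight_ind β T, sum_configWeight_ind β (S ∪ T)]

end Aux

/-! ### The cycle graph -/

open Fin.NatCast Fin.CommRing

section Cyc

variable {N : ℕ} [NeZero N]

/-- All edges `v, v+1, ..., v+d-1` are open. -/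
def Arc (ω : Fin N → Bool) (v : Fin N) (d : ℕ) : Prop :=
  ∀ j < d, ω (v + (j : Fin N)) = true

/-- Cyclic distance from `v` to `u`. -/
def cdist (v u : Fin N) : ℕ := (u.1 + (N - v.1)) % N

lemma Npos : 0 < N := Nat.pos_of_ne_zero (NeZero.ne N)

lemma cdist_lt (v u : Fin N) : cdist v u < N := Nat.mod_lt _ Npos

lemma val_add_cast (v : Fin N) (c : ℕ) (hc : c < N) :
    (v + (c : Fin N)).val = (v.val + c) % N := by
  rw [Fin.add_def, Fin.val_cast_of_lt hc]

lemma add_cdist (v u : Fin N) : v + ((cdist v u : ℕ) : Fin N) = u := by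
  apply Fin.ext
  rw [val_add_cast _ _ (cdist_lt v u)]
  show (v.1 + (u.1 + (N - v.1)) % N) % N = u.1
  have hv : v.1 < N := v.2
  have hu : u.1 < N := u.2
  rcases Nat.lt_or_ge (u.1 + (N - v.1)) N with h | h
  · rw [Nat.mod_eq_of_lt h, (by omega : v.1 + (u.1 + (N - v.1)) = u.1 + N),
      Nat.add_mod_right, Nat.mod_eq_of_lt hu]
  · rw [Nat.mod_eq_sub_mod h, Nat.mod_eq_of_lt (show u.1 + (N - v.1) - N < N by omega),
      (by omega : v.1 + (u.1 + (N - v.1) - N) = u.1), Nat.mod_eq_of_lt hu]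

lemma cdist_add (v : Fin N) (c : ℕ) (hc : c < N) : cdist v (v + (c : Fin N)) = c := by
  unfold cdist
  rw [val_add_cast _ _ hc]
  have hv : v.1 < N := v.2
  rcases Nat.lt_or_ge (v.1 + c) N with h | h
  · rw [Nat.mod_eq_of_lt h, (by omega : v.1 + c + (N - v.1) = c + N),
      Nat.add_mod_right, Nat.mod_eq_of_lt hc]
  · rw [Nat.mod_eq_sub_mod h, Nat.mod_eq_of_lt (by omega : v.1 + c - N < N),
      (by omega : v.1 + c - N + (N - v.1) = c), Nat.mod_eq_of_lt hc]

lemma cdist_self (v : Fin N) : cdist v v = 0 := by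
  unfold cdist
  have hv : v.1 < N := v.2
  rw [(by omega : v.1 + (N - v.1) = N), Nat.mod_self]

lemma cdist_ne_zero {v u : Fin N} (h : u ≠ v) : cdist v u ≠ 0 := by
  intro h0
  apply h
  have h1 := add_cdist v u
  rw [h0, Nat.cast_zero, add_zero] at h1
  exact h1.symm

lemma cdist_rev (v u : Fin N) (h : u ≠ v) : cdist u v = N - cdist v u := by
  set d := cdist v u with hdd
  have hd : d < N := cdist_lt v u
  have hd0 : d ≠ 0 := cdist_ne_zero h
  have h1 : v + ((d : ℕ) : Fin N) = u := add_cdist v u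
  have hv : v = u + (((N - d : ℕ)) : Fin N) := by
    have h2 : ((d : ℕ) : Fin N) + ((N - d : ℕ) : Fin N) = 0 := by
      rw [← Nat.cast_add, (by omega : d + (N - d) = N), Fin.natCast_self]
    rw [← h1, add_assoc, h2, add_zero]
  calc cdist u v = cdist u (u + (((N - d : ℕ)) : Fin N)) := by rw [← hv]
    _ = N - d := cdist_add u _ (by omega)

lemma val_one' (hN : 3 ≤ N) : (1 : Fin N).val = 1 := by
  rw [Fin.val_one', Nat.mod_eq_of_lt (by omega)]

lemma cycleEdge_eq (hN : 3 ≤ N) (e : Fin N) : cycleEdge N e = (e, e + 1) := by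
  unfold cycleEdge
  refine Prod.ext rfl (Fin.ext ?_)
  rw [Fin.add_def, val_one' hN]

lemma openAdj_iff (hN : 3 ≤ N) (ω : Fin N → Bool) (a b : Fin N) :
    OpenAdj (cycleEdge N) ω a b ↔ (ω a = true ∧ b = a + 1) ∨ (ω b = true ∧ a = b + 1) := by
  constructor
  · rintro ⟨e, he, h | h⟩ <;> rw [cycleEdge_eq hN, Prod.ext_iff] at h
    · obtain ⟨h1, h2⟩ := h
      subst h1
      exact Or.inl ⟨he, h2.symm⟩
    · obtain ⟨h1, h2⟩ := h
      subst h1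
      exact Or.inr ⟨he, h2.symm⟩
  · rintro (⟨h1, h2⟩ | ⟨h1, h2⟩)
    · exact ⟨a, h1, Or.inl (by rw [cycleEdge_eq hN, h2])⟩
    · exact ⟨b, h1, Or.inr (by rw [cycleEdge_eq hN, h2])⟩

lemma openAdj_symm {ι V : Type*} (E : ι → V × V) (ω : ι → Bool) :
    Symmetric (OpenAdj E ω) := by
  rintro a b ⟨e, he, h⟩
  exact ⟨e, he, h.symm⟩

lemma reach_of_arc (hN : 3 ≤ N) (ω : Fin N → Bool) (v : Fin N) (c : ℕ) (h : Arc ω v c) :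
    Relation.ReflTransGen (OpenAdj (cycleEdge N) ω) v (v + (c : Fin N)) := by
  induction c with
  | zero => rw [Nat.cast_zero, add_zero]
  | succ c ih =>
    refine (ih (fun j hj => h j (by omega))).tail ?_
    rw [openAdj_iff hN]
    exact Or.inl ⟨h c (by omega), by push_cast; ring⟩

lemma reach_iff (hN : 3 ≤ N) (ω : Fin N → Bool) (v u : Fin N) :
    Relation.ReflTransGen (OpenAdj (cycleEdge N) ω) v u ↔
      Arc ω v (cdist v u) ∨ Arc ω u (cdist u v) := by
  constructor
  · intro h
    suffices h' : ∃ c, c < N ∧ ((u = v + (c : Fin N) ∧ Arc ω v c) ∨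
        (v = u + (c : Fin N) ∧ Arc ω u c)) by
      obtain ⟨c, hc, hcase | hcase⟩ := h'
      · left; rw [hcase.1, cdist_add v c hc]; exact hcase.2
      · right; rw [hcase.1, cdist_add u c hc]; exact hcase.2
    induction h with
    | refl => exact ⟨0, Npos, Or.inl ⟨by rw [Nat.cast_zero, add_zero],
        fun j hj => absurd hj (by omega)⟩⟩
    | @tail w u hb hadj ih =>
      obtain ⟨c, hc, hcase⟩ := ih
      rw [openAdj_iff hN] at hadj
      rcases hadj with ⟨hw, rfl⟩ | ⟨hu, hwu⟩
      · -- u = w + 1, ω w = true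
        rcases hcase with ⟨hw2, harc⟩ | ⟨hw2, harc⟩
        · -- w = v + c, Arc v c
          by_cases hc1 : c + 1 < N
          · refine ⟨c + 1, hc1, Or.inl ⟨by rw [hw2]; push_cast; ring, fun j hj => ?_⟩⟩
            by_cases hjc : j < c
            · exact harc j hjc
            · have hj' : j = c := by omega
              subst hj'
              rw [← hw2]; exact hw
          · refine ⟨0, Npos, Or.inl ⟨?_, fun j hj => absurd hj (by omega)⟩⟩
            have h2 : ((c : Fin N)) + 1 = 0 := by
              rw [← Nat.cast_one, ← Nat.cast_add, (by omega : c + 1 = N), Fin.natCast_self]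
            rw [hw2, Nat.cast_zero, add_zero, add_assoc, h2, add_zero]
        · -- v = w + c, Arc w c
          by_cases hc0 : c = 0
          · have hvw : v = w := by rw [hw2, hc0, Nat.cast_zero, add_zero]
            refine ⟨1, by omega, Or.inl ⟨by rw [hvw, Nat.cast_one], fun j hj => ?_⟩⟩
            have hj' : j = 0 := by omega
            subst hj'
            rw [Nat.cast_zero, add_zero, hvw]
            exact hw
          · refine ⟨c - 1, by omega, Or.inr ⟨?_, fun j hj => ?_⟩⟩
            · rw [hw2, Nat.cast_sub (by omega : 1 ≤ c), Nat.cast_one]; ring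
            · have h2 : (w + 1) + (j : Fin N) = w + (((j + 1 : ℕ)) : Fin N) := by
                push_cast; ring
              rw [h2]
              exact harc (j + 1) (by omega)
      · -- ω u = true, w = u + 1
        rcases hcase with ⟨hw2, harc⟩ | ⟨hw2, harc⟩
        · -- w = v + c, Arc v c, so u + 1 = v + c
          have h3 : u + 1 = v + (c : Fin N) := by rw [← hwu, hw2]
          by_cases hc0 : c = 0
          · have h4 : v = u + 1 := by
              rw [hc0, Nat.cast_zero, add_zero] at h3; exact h3.symm
            refine ⟨1, by omega, Or.inr ⟨by rw [h4, Nat.cast_one], fun j hj => ?_⟩⟩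
            have hj' : j = 0 := by omega
            subst hj'
            rw [Nat.cast_zero, add_zero]
            exact hu
          · refine ⟨c - 1, by omega, Or.inl ⟨?_, fun j hj => harc j (by omega)⟩⟩
            have h5 : v + (((c - 1 : ℕ)) : Fin N) + 1 = v + (c : Fin N) := by
              rw [Nat.cast_sub (by omega : 1 ≤ c), Nat.cast_one]; ring
            have h6 : u + 1 = v + (((c - 1 : ℕ)) : Fin N) + 1 := by rw [h3, ← h5]
            exact add_right_cancel h6
        · -- v = w + c, Arc w c, w = u + 1
          by_cases hc1 : c + 1 < N
          · refine ⟨c + 1, hc1, Or.inr ⟨by rw [hw2, hwu]; push_cast; ring, fun j hj => ?_⟩⟩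
            by_cases hj0 : j = 0
            · subst hj0
              rw [Nat.cast_zero, add_zero]
              exact hu
            · have h2 : u + (j : Fin N) = w + (((j - 1 : ℕ)) : Fin N) := by
                rw [hwu, Nat.cast_sub (by omega : 1 ≤ j), Nat.cast_one]; ring
              rw [h2]
              exact harc (j - 1) (by omega)
          · have huv : u = v := by
              have h2 : (1 : Fin N) + ((c : ℕ) : Fin N) = 0 := by
                rw [← Nat.cast_one, ← Nat.cast_add, (by omega : 1 + c = N), Fin.natCast_self]
              rw [hw2, hwu, add_assoc, h2, add_zero]
            refine ⟨0, Npos, Or.inl ⟨by rw [huv, Nat.cast_zero, add_zero],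
              fun j hj => absurd hj (by omega)⟩⟩
  · rintro (h | h)
    · have h1 := reach_of_arc hN ω v _ h
      rwa [add_cdist] at h1
    · have h1 := reach_of_arc hN ω u _ h
      rw [add_cdist] at h1
      exact (@Relation.ReflTransGen.stdSymm _ _ ⟨fun _ _ h => openAdj_symm _ _ h⟩).symm _ _ h1

/-- The set of edges of the arc of length `d` starting at `v`. -/
def arcSet (v : Fin N) (d : ℕ) : Finset (Fin N) :=
  (Finset.range d).image (fun j : ℕ => v + (j : Fin N))

lemma arc_iff (ω : Fin N → Bool) (v : Fin N) (d : ℕ) :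
    Arc ω v d ↔ ∀ e ∈ arcSet v d, ω e = true := by
  unfold Arc arcSet
  constructor
  · intro h e he
    rw [Finset.mem_image] at he
    obtain ⟨j, hj, rfl⟩ := he
    exact h j (Finset.mem_range.mp hj)
  · intro h j hj
    exact h _ (Finset.mem_image.mpr ⟨j, Finset.mem_range.mpr hj, rfl⟩)

lemma card_arcSet (v : Fin N) (d : ℕ) (hd : d ≤ N) : (arcSet v d).card = d := by
  have hinj : Set.InjOn (fun j : ℕ => v + (j : Fin N)) (Finset.range d) := by
    intro j hj j' hj' hjj
    simp only [Finset.coe_range, Set.mem_Iio] at hj hj'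
    have h1 : ((j : ℕ) : Fin N) = ((j' : ℕ) : Fin N) := add_left_cancel hjj
    have h2 := congrArg Fin.val h1
    rw [Fin.val_cast_of_lt (by omega), Fin.val_cast_of_lt (by omega)] at h2
    exact h2
  rw [arcSet, Finset.card_image_of_injOn hinj, Finset.card_range]

lemma arcSet_union (v u : Fin N) (h : u ≠ v) :
    arcSet v (cdist v u) ∪ arcSet u (cdist u v) = Finset.univ := by
  apply Finset.eq_univ_of_forall
  intro e
  have hd : cdist v u < N := cdist_lt v u
  have hd0 : cdist v u ≠ 0 := cdist_ne_zero h
  have hrev : cdist u v = N - cdist v u := cdist_rev v u h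
  have hc : cdist v e < N := cdist_lt v e
  have he : v + ((cdist v e : ℕ) : Fin N) = e := add_cdist v e
  rcases Nat.lt_or_ge (cdist v e) (cdist v u) with h1 | h1
  · exact Finset.mem_union.mpr (Or.inl (Finset.mem_image.mpr
      ⟨cdist v e, Finset.mem_range.mpr h1, he⟩))
  · refine Finset.mem_union.mpr (Or.inr (Finset.mem_image.mpr
      ⟨cdist v e - cdist v u, Finset.mem_range.mpr (by omega), ?_⟩))
    have hu' : v + ((cdist v u : ℕ) : Fin N) = u := add_cdist v u
    show u + ((cdist v e - cdist v u : ℕ) : Fin N) = e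
    set a := cdist v u with ha
    set b := cdist v e with hb
    rw [← hu', ← he, add_assoc, ← Nat.cast_add, (by omega : a + (b - a) = b)]

end Cyc

/-- In bond percolation with parameter `β ∈ (0,1)` on the cycle graph
`C_N` (`N ≥ 3`), the expected number of vertices reachable from any fixed vertex equals
`(1+β)/(1−β) − (β^{N−1}/(1−β))·((N−1)²β² − (2N² − 2N − 1)β + N²) + N²β^{N−1} − N(N−1)β^N`. -/
theorem stmt14 (N : ℕ) (hN : 3 ≤ N) (β : ℝ) (hβ : β ∈ Set.Ioo (0 : ℝ) 1) (v : Fin N) :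
    expectedEFS β (cycleEdge N) v =
      (1 + β) / (1 - β)
        - (β ^ (N - 1) / (1 - β)) *
            (((N : ℝ) - 1) ^ 2 * β ^ 2 - (2 * (N : ℝ) ^ 2 - 2 * N - 1) * β + (N : ℝ) ^ 2)
        + (N : ℝ) ^ 2 * β ^ (N - 1) - (N : ℝ) * ((N : ℝ) - 1) * β ^ N := by
  obtain ⟨hβ0, hβ1⟩ := hβ
  haveI : NeZero N := ⟨by omega⟩
  have hβne : (1 : ℝ) - β ≠ 0 := ne_of_gt (by linarith)
  have hβne1 : β ≠ 1 := by intro h; rw [h] at hβ1; exact lt_irrefl _ hβ1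
  -- Step 1: expectedEFS as a double sum
  have hcount : ∀ ω : Fin N → Bool, ((reachCount (cycleEdge N) ω v : ℝ))
      = ∑ u : Fin N,
          pInd (Relation.ReflTransGen (OpenAdj (cycleEdge N) ω) v u) := by
    intro ω
    rw [reachCount, Finset.card_filter, Nat.cast_sum]
    refine Finset.sum_congr rfl fun u _ => ?_
    by_cases h : Relation.ReflTransGen (OpenAdj (cycleEdge N) ω) v u
    · rw [pInd_pos h, if_pos h, Nat.cast_one]
    · rw [pInd_neg h, if_neg h, Nat.cast_zero]
  have h1 : expectedEFS β (cycleEdge N) v = ∑ u : Fin N, ∑ ω : Fin N → Bool,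
      configWeight β ω *
        pInd (Relation.ReflTransGen (OpenAdj (cycleEdge N) ω) v u) := by
    have h0 : ∀ ω : Fin N → Bool, configWeight β ω * ((reachCount (cycleEdge N) ω v : ℝ))
        = ∑ u : Fin N, configWeight β ω *
            pInd (Relation.ReflTransGen (OpenAdj (cycleEdge N) ω) v u) := by
      intro ω
      rw [hcount ω, Finset.mul_sum]
    have hEFS : expectedEFS β (cycleEdge N) v
        = ∑ ω : Fin N → Bool, configWeight β ω * ((reachCount (cycleEdge N) ω v : ℝ)) := by
      unfold expectedEFS
      congr!
    exact hEFS.trans ((Finset.sum_congr rfl fun ω _ => h0 ω).trans Finset.sum_comm)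
  -- Step 2: per-vertex probability
  have h2 : ∀ u : Fin N, (∑ ω : Fin N → Bool, configWeight β ω *
      pInd (Relation.ReflTransGen (OpenAdj (cycleEdge N) ω) v u))
      = β ^ (cdist v u) + β ^ (cdist u v) - β ^ (if u = v then 0 else N) := by
    intro u
    have hstep : ∀ ω : Fin N → Bool, configWeight β ω *
        pInd (Relation.ReflTransGen (OpenAdj (cycleEdge N) ω) v u)
        = configWeight β ω * pInd ((∀ e ∈ arcSet v (cdist v u), ω e = true) ∨
            (∀ e ∈ arcSet u (cdist u v), ω e = true)) := by
      intro ω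
      exact congrArg (fun t => configWeight β ω * t)
        (pInd_congr ((reach_iff hN ω v u).trans
          (or_congr (arc_iff ω v _) (arc_iff ω u _))))
    have hcard : (arcSet v (cdist v u) ∪ arcSet u (cdist u v)).card
        = if u = v then 0 else N := by
      by_cases huv : u = v
      · rw [if_pos huv, huv, cdist_self]
        simp [arcSet]
      · rw [if_neg huv, arcSet_union v u huv, Finset.card_univ, Fintype.card_fin]
    have hor := sum_configWeight_or β (arcSet v (cdist v u)) (arcSet u (cdist u v))
    rw [card_arcSet v _ (le_of_lt (cdist_lt v u)), card_arcSet u _ (le_of_lt (cdist_lt u v)),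
      hcard] at hor
    exact (Finset.sum_congr rfl fun ω _ => hstep ω).trans hor
  rw [h1, Finset.sum_congr rfl fun u _ => h2 u]
  -- Step 3: reindex the sum over vertices
  have h4 : ∀ c : Fin N,
      (if c.1 = 0 then (1:ℝ) else β ^ c.1 + β ^ (N - c.1) - β ^ N)
      = β ^ (cdist v (v + c)) + β ^ (cdist (v + c) v) - β ^ (if v + c = v then 0 else N) := by
    intro c
    have hcv : cdist v (v + c) = c.1 := by
      calc cdist v (v + c) = cdist v (v + ((c.1 : ℕ) : Fin N)) := by
            rw [Fin.cast_val_eq_self c]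
        _ = c.1 := cdist_add v c.1 c.isLt
    by_cases hc0 : c.1 = 0
    · have hc0' : c = 0 := Fin.ext (by simp [hc0])
      subst hc0'
      rw [if_pos hc0, add_zero, cdist_self, if_pos rfl]
      norm_num
    · have hne : v + c ≠ v := by
        intro hh
        apply hc0
        have : c = 0 := by
          have := add_left_cancel (hh.trans (add_zero v).symm)
          exact this
        rw [this, Fin.val_zero]
      rw [if_neg hne, if_neg hc0, hcv, cdist_rev v (v + c) hne, hcv]
  have h5 : (∑ u : Fin N,
      (β ^ (cdist v u) + β ^ (cdist u v) - β ^ (if u = v then 0 else N)))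
      = ∑ k ∈ Finset.range N, (if k = 0 then (1:ℝ) else β ^ k + β ^ (N - k) - β ^ N) := by
    rw [← Fin.sum_univ_eq_sum_range
      (fun k => if k = 0 then (1:ℝ) else β ^ k + β ^ (N - k) - β ^ N) N]
    exact (Fintype.sum_bijective (fun c : Fin N => v + c) (AddGroup.addLeft_bijective v)
      _ _ fun c => h4 c).symm
  rw [h5]
  -- Step 4: evaluate the sum
  have h6 : ∑ k ∈ Finset.range N, (if k = 0 then (1:ℝ) else β ^ k + β ^ (N - k) - β ^ N)
      = 1 + (∑ k ∈ Finset.Ico 1 N, (β ^ k + β ^ (N - k) - β ^ N)) := by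
    rw [Finset.range_eq_Ico, Finset.sum_eq_sum_Ico_succ_bot Npos, if_pos rfl]
    congr 1
    exact Finset.sum_congr rfl fun k hk => by
      rw [if_neg (by rw [Finset.mem_Ico] at hk; omega)]
  have hrefl : ∑ k ∈ Finset.Ico 1 N, β ^ (N - k) = ∑ k ∈ Finset.Ico 1 N, β ^ k := by
    rw [Finset.sum_Ico_eq_sum_range, Finset.sum_Ico_eq_sum_range,
      ← Finset.sum_range_reflect (fun i => β ^ (1 + i)) (N - 1)]
    refine Finset.sum_congr rfl fun i hi => ?_
    rw [Finset.mem_range] at hi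
    congr 1
    omega
  have hico : ∑ k ∈ Finset.Ico 1 N, β ^ k = (∑ k ∈ Finset.range N, β ^ k) - 1 := by
    rw [Finset.range_eq_Ico, Finset.sum_eq_sum_Ico_succ_bot Npos, pow_zero]
    ring
  have h7 : ∑ k ∈ Finset.Ico 1 N, (β ^ k + β ^ (N - k) - β ^ N)
      = 2 * ((∑ k ∈ Finset.range N, β ^ k) - 1) - ((N : ℝ) - 1) * β ^ N := by
    rw [Finset.sum_sub_distrib, Finset.sum_add_distrib, hrefl, hico, Finset.sum_const,
      Nat.card_Ico, nsmul_eq_mul, Nat.cast_sub (by omega : 1 ≤ N), Nat.cast_one]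
    ring
  rw [h6, h7, geom_sum_eq hβne1]
  have hpow : β ^ N = β ^ (N - 1) * β := by
    rw [← pow_succ]
    congr 1
    omega
  rw [hpow]
  have hβne2 : β - 1 ≠ 0 := by intro h; apply hβne1; linarith
  field_simp
  ring
end
end
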